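/- Let x be k-sparse, 0 < κ < 1, and suppose ‖Aᵀw‖_∞ ≤ κλσ where y = Ax + w. If x̂ minimizes (1/2)‖y − Az‖₂² + λσ‖z‖₁, then ‖x̂ − x‖_q ≤ ((1+κ)/(1−κ)) · 2 k^{1−1/q} λσ / ρ²(A) and ‖x̂ − x‖₁ ≤ ((1+κ)/(1−κ)²) · 4 k^{2−2/q} λσ / ρ²(A), where ρ(A) = ρ_{q, (2/(1−κ))^{q/(q−1)} k}(A) > 0. -/

import Mathlib

open Finset Matrix

noncomputable def l1 {N : ℕ} (z : Fin N → ℝ) : ℝ := ∑ i, |z i|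
noncomputable def lq {N : ℕ} (q : ℝ) (z : Fin N → ℝ) : ℝ := (∑ i, |z i| ^ q) ^ (1/q)
noncomputable def l2 {m : ℕ} (v : Fin m → ℝ) : ℝ := Real.sqrt (∑ i, (v i)^2)
noncomputable def linf {N : ℕ} (z : Fin N → ℝ) : ℝ := ⨆ i, |z i|
open scoped Classical in
noncomputable def l0 {N : ℕ} (z : Fin N → ℝ) : ℕ := (Finset.univ.filter (fun i => z i ≠ 0)).card
noncomputable def sparsityQ {N : ℕ} (q : ℝ) (z : Fin N → ℝ) : ℝ := (l1 z / lq q z) ^ (q/(q-1))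
noncomputable def cmsv {m N : ℕ} (q s : ℝ) (A : Matrix (Fin m) (Fin N) ℝ) : ℝ :=
  sInf { r | ∃ z : Fin N → ℝ, z ≠ 0 ∧ sparsityQ q z ≤ s ∧ r = l2 (A.mulVec z) / lq q z }

/-!
Write `h = xh - x` and `T` for the support of `x`. Comparing the lasso objective at `xh` with its
value at `x` and bounding the noise term by `κ λ ‖h‖₁` gives the basic inequality
`½ ‖A h‖₂² ≤ λ ((1 + κ) ‖h_T‖₁ - (1 - κ) ‖h_Tᶜ‖₁)`. So `h` lies in the cone
`(1 - κ) ‖h‖₁ ≤ 2 ‖h_T‖₁`, and Hölder's `‖h_T‖₁ ≤ k ^ (1 - 1/q) ‖h‖_q` turns this into the sparsity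
bound `s_q(h) ≤ (2 / (1 - κ)) ^ (q/(q-1)) k`. The definition of `ρ` then yields
`ρ² ‖h‖_q² ≤ ‖A h‖₂² ≤ 2 λ (1 + κ) k ^ (1 - 1/q) ‖h‖_q`, and both bounds follow.
-/

lemma l1_nonneg {N : ℕ} (z : Fin N → ℝ) : 0 ≤ l1 z :=
  sum_nonneg fun _ _ => abs_nonneg _

lemma lq_nonneg {N : ℕ} (q : ℝ) (z : Fin N → ℝ) : 0 ≤ lq q z :=
  Real.rpow_nonneg (sum_nonneg fun _ _ => Real.rpow_nonneg (abs_nonneg _) q) _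

lemma lq_pos {N : ℕ} (q : ℝ) {z : Fin N → ℝ} (hz : z ≠ 0) : 0 < lq q z := by
  obtain ⟨i, hi⟩ := Function.ne_iff.mp hz
  refine Real.rpow_pos_of_pos (lt_of_lt_of_le ?_ (single_le_sum
    (fun j _ => Real.rpow_nonneg (abs_nonneg (z j)) q) (mem_univ i))) _
  exact Real.rpow_pos_of_pos (abs_pos.mpr hi) q

lemma lq_zero {N : ℕ} {q : ℝ} (hq : q ≠ 0) : lq q (0 : Fin N → ℝ) = 0 := by
  simp [lq, Real.zero_rpow hq, hq]

lemma l2_sq {m : ℕ} (v : Fin m → ℝ) : l2 v ^ 2 = v ⬝ᵥ v := by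
  rw [l2, Real.sq_sqrt (sum_nonneg fun _ _ => sq_nonneg _)]
  simp only [dotProduct, sq]

lemma l2_sub_sq {m : ℕ} (u v : Fin m → ℝ) :
    l2 (u - v) ^ 2 = l2 u ^ 2 - 2 * (u ⬝ᵥ v) + l2 v ^ 2 := by
  simp only [l2_sq, sub_dotProduct, dotProduct_sub, dotProduct_comm v u]
  ring

lemma abs_le_linf {N : ℕ} (z : Fin N → ℝ) (i : Fin N) : |z i| ≤ linf z :=
  le_ciSup (f := fun i => |z i|) (Set.finite_range _).bddAbove i

lemma dotProduct_le_linf_mul_l1 {N : ℕ} (u v : Fin N → ℝ) : u ⬝ᵥ v ≤ linf u * l1 v := by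
  rw [l1, mul_sum]
  refine sum_le_sum fun i _ => ?_
  calc u i * v i ≤ |u i| * |v i| := by rw [← abs_mul]; exact le_abs_self _
    _ ≤ linf u * |v i| := by gcongr; exact abs_le_linf u i

lemma l1_sub_l1_le_of_support {N : ℕ} {x : Fin N → ℝ} {T : Finset (Fin N)}
    (hT : ∀ i ∉ T, x i = 0) (xh : Fin N → ℝ) :
    l1 x - l1 xh ≤ ∑ i ∈ T, |(xh - x) i| - ∑ i ∈ Tᶜ, |(xh - x) i| := by
  have hoff : ∑ i ∈ Tᶜ, |(xh - x) i| = ∑ i ∈ Tᶜ, |xh i| :=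
    sum_congr rfl fun i hi => by rw [Pi.sub_apply, hT i (mem_compl.mp hi), sub_zero]
  have hx : ∑ i ∈ Tᶜ, |x i| = 0 :=
    sum_eq_zero fun i hi => by rw [hT i (mem_compl.mp hi), abs_zero]
  have hon : ∑ i ∈ T, |x i| - ∑ i ∈ T, |xh i| ≤ ∑ i ∈ T, |(xh - x) i| := by
    rw [← sum_sub_distrib]
    exact sum_le_sum fun i _ => by
      rw [Pi.sub_apply, abs_sub_comm]; exact abs_sub_abs_le_abs_sub _ _
  rw [l1, l1, ← sum_add_sum_compl T, ← sum_add_sum_compl T (fun i => |xh i|), hx, hoff]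
  linarith

lemma sum_abs_le_card_rpow_mul_lq {N : ℕ} {q : ℝ} (hq : 1 < q) (T : Finset (Fin N))
    (z : Fin N → ℝ) : ∑ i ∈ T, |z i| ≤ (#T : ℝ) ^ (1 - 1/q) * lq q z := by
  have hq0 : 0 < q := by linarith
  have hholder := Real.inner_le_Lp_mul_Lq_of_nonneg T
    (Real.HolderConjugate.conjExponent hq).symm (f := fun _ => (1 : ℝ)) (g := fun i => |z i|)
    (fun _ _ => zero_le_one) (fun i _ => abs_nonneg (z i))
  have hexp : 1 / q.conjExponent = 1 - 1/q := by
    rw [Real.conjExponent, one_div_div, sub_div, div_self hq0.ne']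
  simp only [one_mul, Real.one_rpow, sum_const, nsmul_eq_mul, mul_one] at hholder
  rw [hexp] at hholder
  refine hholder.trans (mul_le_mul_of_nonneg_left ?_ (by positivity))
  exact Real.rpow_le_rpow (sum_nonneg fun i _ => Real.rpow_nonneg (abs_nonneg _) q)
    (sum_le_sum_of_subset_of_nonneg (subset_univ T)
      fun i _ _ => Real.rpow_nonneg (abs_nonneg _) q) (by positivity)

lemma sparsityQ_le_of_l1_le {N : ℕ} {q c k : ℝ} (hq : 1 < q) (hc : 0 ≤ c) (hk : 0 ≤ k)
    {z : Fin N → ℝ} (hz : l1 z ≤ c * k ^ (1 - 1/q) * lq q z) :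
    sparsityQ q z ≤ c ^ (q/(q-1)) * k := by
  have hp : 0 < q / (q - 1) := div_pos (by linarith) (by linarith)
  have hratio : l1 z / lq q z ≤ c * k ^ (1 - 1/q) := by
    rcases (lq_nonneg q z).eq_or_lt with hL | hL
    · rw [← hL, div_zero]; positivity
    · exact (div_le_iff₀ hL).mpr hz
  have hkp : (k ^ (1 - 1/q)) ^ (q/(q-1)) = k := by
    have hexp : (1 - 1/q) * (q/(q-1)) = 1 := by field_simp; exact div_self (by linarith)
    rw [← Real.rpow_mul hk, hexp, Real.rpow_one]
  calc sparsityQ q z ≤ (c * k ^ (1 - 1/q)) ^ (q/(q-1)) :=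
        Real.rpow_le_rpow (div_nonneg (l1_nonneg z) (lq_nonneg q z)) hratio hp.le
    _ = c ^ (q/(q-1)) * k := by rw [Real.mul_rpow hc (by positivity), hkp]

lemma cmsv_mul_lq_le {m N : ℕ} {q s : ℝ} (hq : 0 < q) (A : Matrix (Fin m) (Fin N) ℝ)
    {z : Fin N → ℝ} (hz : sparsityQ q z ≤ s) : cmsv q s A * lq q z ≤ l2 (A *ᵥ z) := by
  rcases eq_or_ne z 0 with rfl | hz0
  · rw [lq_zero hq.ne', mul_zero]; exact Real.sqrt_nonneg _
  have hL := lq_pos q hz0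
  rw [← le_div_iff₀ hL]
  refine csInf_le ⟨0, ?_⟩ ⟨z, hz0, hz, rfl⟩
  rintro r ⟨v, -, -, rfl⟩
  exact div_nonneg (Real.sqrt_nonneg _) (lq_nonneg q v)

lemma lasso_basic_inequality {m N : ℕ} (A : Matrix (Fin m) (Fin N) ℝ) (x xh : Fin N → ℝ)
    (w : Fin m → ℝ) (lam : ℝ)
    (hopt : (1/2) * l2 (A *ᵥ x + w - A *ᵥ xh) ^ 2 + lam * l1 xh ≤
      (1/2) * l2 (A *ᵥ x + w - A *ᵥ x) ^ 2 + lam * l1 x) :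
    (1/2) * l2 (A *ᵥ (xh - x)) ^ 2 ≤ (Aᵀ *ᵥ w) ⬝ᵥ (xh - x) + lam * (l1 x - l1 xh) := by
  rw [show A *ᵥ x + w - A *ᵥ xh = w - A *ᵥ (xh - x) by rw [mulVec_sub]; abel,
    add_sub_cancel_left, l2_sub_sq, dotProduct_mulVec, ← mulVec_transpose] at hopt
  linarith

lemma lasso_basic_inequality_of_support {m N : ℕ} (A : Matrix (Fin m) (Fin N) ℝ)
    (x xh : Fin N → ℝ) (w : Fin m → ℝ) {lam : ℝ} (κ : ℝ) (T : Finset (Fin N)) (hlam : 0 ≤ lam)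
    (hw : linf (Aᵀ *ᵥ w) ≤ κ * lam) (hT : ∀ i ∉ T, x i = 0)
    (hopt : (1/2) * l2 (A *ᵥ x + w - A *ᵥ xh) ^ 2 + lam * l1 xh ≤
      (1/2) * l2 (A *ᵥ x + w - A *ᵥ x) ^ 2 + lam * l1 x) :
    (1/2) * l2 (A *ᵥ (xh - x)) ^ 2 ≤
      lam * ((1 + κ) * ∑ i ∈ T, |(xh - x) i| - (1 - κ) * ∑ i ∈ Tᶜ, |(xh - x) i|) := by
  have hnoise : (Aᵀ *ᵥ w) ⬝ᵥ (xh - x) ≤ κ * lam * l1 (xh - x) :=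
    (dotProduct_le_linf_mul_l1 _ _).trans (mul_le_mul_of_nonneg_right hw (l1_nonneg _))
  have hsplit : l1 (xh - x) = ∑ i ∈ T, |(xh - x) i| + ∑ i ∈ Tᶜ, |(xh - x) i| :=
    (sum_add_sum_compl T _).symm
  have hsupp := mul_le_mul_of_nonneg_left (l1_sub_l1_le_of_support hT xh) hlam
  rw [hsplit] at hnoise
  linarith [lasso_basic_inequality A x xh w lam hopt]

lemma lasso_cone_and_fit {m N : ℕ} {A : Matrix (Fin m) (Fin N) ℝ} {h : Fin N → ℝ}
    {T : Finset (Fin N)} {lam κ : ℝ} (hlam : 0 < lam) (hκ : κ < 1)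
    (hbasic : (1/2) * l2 (A *ᵥ h) ^ 2 ≤
      lam * ((1 + κ) * ∑ i ∈ T, |h i| - (1 - κ) * ∑ i ∈ Tᶜ, |h i|)) :
    (1 - κ) * l1 h ≤ 2 * ∑ i ∈ T, |h i| ∧
      l2 (A *ᵥ h) ^ 2 ≤ 2 * lam * (1 + κ) * ∑ i ∈ T, |h i| := by
  have htail : 0 ≤ lam * ((1 - κ) * ∑ i ∈ Tᶜ, |h i|) :=
    mul_nonneg hlam.le (mul_nonneg (by linarith) (sum_nonneg fun i _ => abs_nonneg _))
  have hpos : 0 ≤ lam * ((1 + κ) * ∑ i ∈ T, |h i| - (1 - κ) * ∑ i ∈ Tᶜ, |h i|) :=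
    (by positivity : (0 : ℝ) ≤ (1/2) * l2 (A *ᵥ h) ^ 2).trans hbasic
  refine ⟨?_, by linarith⟩
  rw [l1, ← sum_add_sum_compl T]
  nlinarith [(mul_nonneg_iff_of_pos_left hlam).mp hpos]

lemma error_bounds_of_cone_and_fit {ρ L ℓ a s lam κ : ℝ} (hρ : 0 < ρ) (hL : 0 ≤ L)
    (hs : 0 ≤ s) (hlam : 0 < lam) (hκ0 : 0 ≤ κ) (hκ1 : κ < 1) (ha : a ≤ s * L)
    (hfit : (ρ * L) ^ 2 ≤ 2 * lam * (1 + κ) * a) (hcone : (1 - κ) * ℓ ≤ 2 * a) :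
    L ≤ (1 + κ) / (1 - κ) * (2 * s * lam) / ρ ^ 2 ∧
      ℓ ≤ (1 + κ) / (1 - κ) ^ 2 * (4 * s ^ 2 * lam) / ρ ^ 2 := by
  have hκ : 0 < 1 - κ := by linarith
  set C := 2 * lam * (1 + κ) * s / ρ ^ 2 with hC
  have hC0 : 0 ≤ C := by positivity
  have herr : L ≤ C := by
    rw [le_div_iff₀ (by positivity)]
    rcases hL.eq_or_lt with hL0 | hL0
    · rw [← hL0, zero_mul]; positivity
    · refine le_of_mul_le_mul_right ?_ hL0
      calc L * ρ ^ 2 * L = (ρ * L) ^ 2 := by ring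
        _ ≤ 2 * lam * (1 + κ) * a := hfit
        _ ≤ 2 * lam * (1 + κ) * (s * L) := by gcongr
        _ = 2 * lam * (1 + κ) * s * L := by ring
  constructor
  · calc L ≤ C := herr
      _ ≤ C / (1 - κ) := le_div_self hC0 hκ (by linarith)
      _ = _ := by rw [hC]; field_simp
  · calc ℓ ≤ 2 * s * L / (1 - κ) := by rw [le_div_iff₀ hκ]; linarith
      _ ≤ 2 * s * C / (1 - κ) := by gcongr
      _ ≤ 2 * s * C / (1 - κ) / (1 - κ) := le_div_self (by positivity) hκ (by linarith)
      _ = _ := by rw [hC]; field_simp; ring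

theorem stmt14 {m N k : ℕ} (A : Matrix (Fin m) (Fin N) ℝ)
    (x xh : Fin N → ℝ) (w y : Fin m → ℝ) (lam κ : ℝ)
    (hlam : 0 < lam) (hκ0 : 0 < κ) (hκ1 : κ < 1)
    (hy : y = A.mulVec x + w) (hw : linf (A.transpose.mulVec w) ≤ κ * lam)
    (hx : l0 x ≤ k) (q : ℝ) (hq : 1 < q)
    (hmin : ∀ z : Fin N → ℝ,
      (1/2) * (l2 (y - A.mulVec xh))^2 + lam * l1 xh ≤
        (1/2) * (l2 (y - A.mulVec z))^2 + lam * l1 z)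
    (hρ : 0 < cmsv q ((2/(1-κ)) ^ (q/(q-1)) * (k : ℝ)) A) :
    lq q (xh - x) ≤ (1+κ)/(1-κ) * (2 * (k : ℝ) ^ (1 - 1/q) * lam) /
        (cmsv q ((2/(1-κ)) ^ (q/(q-1)) * (k : ℝ)) A) ^ 2 ∧
      l1 (xh - x) ≤ (1+κ)/(1-κ)^2 * (4 * (k : ℝ) ^ (2 - 2/q) * lam) /
        (cmsv q ((2/(1-κ)) ^ (q/(q-1)) * (k : ℝ)) A) ^ 2 := by
  classical
  subst hy
  set ρ := cmsv q ((2/(1-κ)) ^ (q/(q-1)) * (k : ℝ)) A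
  set T := univ.filter (fun i => x i ≠ 0)
  set s := (k : ℝ) ^ (1 - 1/q)
  obtain ⟨hcone, hfit⟩ := lasso_cone_and_fit hlam hκ1 <| lasso_basic_inequality_of_support
    A x xh w κ T hlam.le hw (fun i hi => by simpa [T] using hi) (hmin x)
  have hhead : ∑ i ∈ T, |(xh - x) i| ≤ s * lq q (xh - x) :=
    (sum_abs_le_card_rpow_mul_lq hq T _).trans <| mul_le_mul_of_nonneg_right
      (Real.rpow_le_rpow (Nat.cast_nonneg _) (by exact_mod_cast hx)
        (by rw [sub_nonneg, div_le_one (by linarith)]; exact hq.le)) (lq_nonneg q _)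
  have hsparse : sparsityQ q (xh - x) ≤ (2/(1-κ)) ^ (q/(q-1)) * k := by
    refine sparsityQ_le_of_l1_le hq (div_nonneg zero_le_two (by linarith)) (Nat.cast_nonneg k) ?_
    rw [div_mul_eq_mul_div, div_mul_eq_mul_div, le_div_iff₀ (by linarith)]
    linarith
  have hre : ρ * lq q (xh - x) ≤ l2 (A *ᵥ (xh - x)) := cmsv_mul_lq_le (by linarith) A hsparse
  have hk2 : (k : ℝ) ^ (2 - 2/q) = s ^ 2 := by
    rw [← Real.rpow_natCast, ← Real.rpow_mul (Nat.cast_nonneg k)]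
    ring_nf
  rw [hk2]
  exact error_bounds_of_cone_and_fit hρ (lq_nonneg q _) (by positivity) hlam hκ0.le hκ1 hhead
    ((pow_le_pow_left₀ (mul_nonneg hρ.le (lq_nonneg q _)) hre 2).trans hfit) hcone
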